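/- Let Gamma be a weighted tree containing a path b_1, z_1, b_2, z_2, ..., z_{n-1}, b_n (with n >= 1), where each z_i has degree 2 in Gamma and weight 0, and b_i has weight w_i. Then Gamma is birationally equivalent to the weighted tree with the same underlying tree and the same weights, except that b_i has weight 0 for all i < n and b_n has weight w_1 + w_2 + ... + w_n. -/

import Mathlib

/-- A weighted graph: a finite simple graph on a finite set of natural-number
vertices, with an integer weight attached to each vertex. -/
structure WGraph where
  verts : Finset ℕ
  adj : ℕ → ℕ → Bool
  symm : ∀ u v, adj u v = true → adj v u = true
  loopless : ∀ v, adj v v = false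
  support : ∀ u v, adj u v = true → u ∈ verts ∧ v ∈ verts
  wt : ℕ → ℤ

namespace WGraph

/-- The degree of a vertex. -/
def deg (G : WGraph) (v : ℕ) : ℕ := (G.verts.filter (fun u => G.adj v u = true)).card

/-- A branching point: a vertex of degree at least `3`. -/
def Branch (G : WGraph) (v : ℕ) : Prop := v ∈ G.verts ∧ 3 ≤ G.deg v

/-- The graph is connected (and nonempty). -/
def Connected (G : WGraph) : Prop :=
  G.verts.Nonempty ∧ ∀ u ∈ G.verts, ∀ v ∈ G.verts,
    Relation.ReflTransGen (fun a b => G.adj a b = true) u v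

/-- A circular graph: a nonempty connected graph all of whose vertices have degree `2`,
i.e. a cycle. -/
def IsCircular (G : WGraph) : Prop :=
  G.verts.Nonempty ∧ G.Connected ∧ ∀ v ∈ G.verts, G.deg v = 2

/-- The set of non-branching vertices. -/
def NB (G : WGraph) : Set ℕ := {v | v ∈ G.verts ∧ G.deg v < 3}

/-- A linear segment: a connected component of the graph obtained by deleting
the branching points. -/
def IsSegment (G : WGraph) (S : Set ℕ) : Prop :=
  ∃ v ∈ G.NB, S = {u | Relation.ReflTransGen
    (fun a b => a ∈ G.NB ∧ b ∈ G.NB ∧ G.adj a b = true) v u}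

/-- `l` is a consecutive enumeration of the linear segment `S`. -/
def SegList (G : WGraph) (S : Set ℕ) (l : List ℕ) : Prop :=
  l.Nodup ∧ (∀ v, v ∈ l ↔ v ∈ S) ∧ l.Chain' (fun a b => G.adj a b = true)

/-- A standard weight sequence: all weights zero, or an even number `2k ≥ 0` of zeros
followed by weights `≤ -2`. -/
def StdSeq (m : List ℤ) : Prop :=
  (∀ x ∈ m, x = 0) ∨
  ∃ (k : ℕ) (ws : List ℤ), m = List.replicate (2 * k) 0 ++ ws ∧ ∀ x ∈ ws, x ≤ -2

/-- A standard weighted graph: connected, and every linear segment, enumerated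
consecutively starting (when the segment is adjacent to exactly one branching point)
from the vertex adjacent to that branching point, has a standard weight sequence. -/
def IsStandard (G : WGraph) : Prop :=
  G.Connected ∧
  ∀ S, G.IsSegment S → ∃ l, G.SegList S l ∧ StdSeq (l.map G.wt) ∧
    ∀ b, G.Branch b → (∃ v ∈ S, G.adj b v = true) →
      (∀ b', G.Branch b' → (∃ v' ∈ S, G.adj b' v' = true) → b' = b) →
      ∃ v0, l.head? = some v0 ∧ G.adj b v0 = true

/-- `G'` is obtained from `G` by the inner blowup at the edge `uv`, creating the
new vertex `x`: the edge `uv` is deleted, `x` gets weight `-1` and is joined to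
`u` and `v`, and the weights of `u` and `v` drop by `1`. -/
def IsInnerBlowup (G G' : WGraph) (u v x : ℕ) : Prop :=
  G.adj u v = true ∧ x ∉ G.verts ∧
  G'.verts = insert x G.verts ∧
  (∀ a b, G'.adj a b = true ↔
    ((G.adj a b = true ∧ ¬(a = u ∧ b = v) ∧ ¬(a = v ∧ b = u)) ∨
     (a = x ∧ (b = u ∨ b = v)) ∨ (b = x ∧ (a = u ∨ a = v)))) ∧
  (∀ a, G'.wt a = if a = x then -1 else if a = u then G.wt a - 1
    else if a = v then G.wt a - 1 else G.wt a)

/-- `G'` is obtained from `G` by the outer blowup at the vertex `v`, creating the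
new vertex `x` of weight `-1` joined only to `v`; the weight of `v` drops by `1`. -/
def IsOuterBlowup (G G' : WGraph) (v x : ℕ) : Prop :=
  v ∈ G.verts ∧ x ∉ G.verts ∧
  G'.verts = insert x G.verts ∧
  (∀ a b, G'.adj a b = true ↔
    (G.adj a b = true ∨ (a = x ∧ b = v) ∨ (b = x ∧ a = v))) ∧
  (∀ a, G'.wt a = if a = x then -1 else if a = v then G.wt a - 1 else G.wt a)

/-- A single blowup. -/
def BlowupStep (G G' : WGraph) : Prop :=
  (∃ u v x, IsInnerBlowup G G' u v x) ∨ (∃ v x, IsOuterBlowup G G' v x)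

/-- A single blowup or blowdown (a blowdown being the inverse of a blowup). -/
def Move (G G' : WGraph) : Prop := BlowupStep G G' ∨ BlowupStep G' G

/-- A weight-preserving isomorphism of weighted graphs. -/
def WIso (G G' : WGraph) : Prop :=
  ∃ f : ℕ → ℕ, Set.BijOn f (G.verts : Set ℕ) (G'.verts : Set ℕ) ∧
    (∀ u ∈ G.verts, ∀ v ∈ G.verts, G'.adj (f u) (f v) = G.adj u v) ∧
    (∀ v ∈ G.verts, G'.wt (f v) = G.wt v)

/-- Birational equivalence of weighted graphs: the equivalence relation generated by
blowups, blowdowns and weight-preserving isomorphisms. -/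
def BirEq : WGraph → WGraph → Prop :=
  Relation.EqvGen (fun G G' => Move G G' ∨ WIso G G')

end WGraph

namespace WGraph

/-- `G` is a tree: a connected graph whose number of edges is one less than its
number of vertices (the sum of all degrees counts each edge twice). -/
def IsTree (G : WGraph) : Prop :=
  G.Connected ∧ ∑ v ∈ G.verts, G.deg v = 2 * (G.verts.card - 1)

end WGraph

/-- Interleave two lists, alternating and starting with the first list:
`interleave [b₁,…,bₙ] [z₁,…,z_{n-1}] = [b₁, z₁, b₂, z₂, …, z_{n-1}, bₙ]`. -/
def interleave : List ℕ → List ℕ → List ℕ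
  | [], ys => ys
  | x :: xs, ys => x :: interleave ys xs
  termination_by xs ys => xs.length + ys.length

/-! If `z` has degree `2` and weight `0` and lies between `b` and `b'`, blowing up the edge `bz`
and then blowing down `z` (whose weight has dropped to `-1`) gives back, after renaming the new
vertex to `z`, the same graph with one unit of weight moved from `b` to `b'`. Iterating in both
directions moves any integer amount of weight across `z`; moving the whole weight of `bᵢ` onto
`bᵢ₊₁` for `i = 1, …, n - 1` in turn collects all the weight at `bₙ`. -/

namespace WGraph

def withWt (G : WGraph) (w : ℕ → ℤ) : WGraph := { G with wt := w }

lemma eq_withWt_of_verts_adj_eq {G G' : WGraph} (hv : G'.verts = G.verts)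
    (ha : ∀ a b, G'.adj a b = G.adj a b) : G' = G.withWt G'.wt := by
  obtain ⟨V', A', _, _, _, W'⟩ := G'
  obtain ⟨V, A, _, _, _, W⟩ := G
  obtain rfl : V' = V := hv
  obtain rfl : A' = A := funext fun a => funext (ha a)
  rfl

lemma ne_of_adj {G : WGraph} {u v : ℕ} (h : G.adj u v = true) : u ≠ v := by
  rintro rfl
  simp [G.loopless] at h

lemma adj_iff_of_deg_eq_two {G : WGraph} {z b b' : ℕ} (hzb : G.adj z b = true)
    (hzb' : G.adj z b' = true) (hdeg : G.deg z = 2) (hbb' : b ≠ b') (c : ℕ) :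
    G.adj z c = true ↔ c = b ∨ c = b' := by
  have hsub : ({b, b'} : Finset ℕ) ⊆ G.verts.filter (fun u => G.adj z u = true) := by
    intro c hc
    simp only [Finset.mem_insert, Finset.mem_singleton] at hc
    rcases hc with rfl | rfl
    · exact Finset.mem_filter.2 ⟨(G.support _ _ hzb).2, hzb⟩
    · exact Finset.mem_filter.2 ⟨(G.support _ _ hzb').2, hzb'⟩
  have hnbrs := Finset.eq_of_subset_of_card_le hsub
    (by simp [Finset.card_pair hbb', ← hdeg, deg])
  constructor
  · intro h
    have hc : c ∈ ({b, b'} : Finset ℕ) :=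
      hnbrs ▸ Finset.mem_filter.2 ⟨(G.support _ _ h).2, h⟩
    simpa using hc
  · rintro (rfl | rfl) <;> assumption

def innerBlowup (G : WGraph) (u v x : ℕ) (huv : G.adj u v = true) (hx : x ∉ G.verts) :
    WGraph where
  verts := insert x G.verts
  adj a b := decide ((G.adj a b = true ∧ ¬(a = u ∧ b = v) ∧ ¬(a = v ∧ b = u)) ∨
    (a = x ∧ (b = u ∨ b = v)) ∨ (b = x ∧ (a = u ∨ a = v)))
  symm a b h := by
    have := G.symm a b
    grind
  loopless a := by
    have := G.loopless a
    have := G.support u v huv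
    grind
  support a b h := by
    have := G.support a b
    have := G.support u v huv
    grind
  wt a := if a = x then -1 else if a = u then G.wt a - 1 else if a = v then G.wt a - 1 else G.wt a

lemma isInnerBlowup_innerBlowup (G : WGraph) (u v x : ℕ) (huv : G.adj u v = true)
    (hx : x ∉ G.verts) : IsInnerBlowup G (G.innerBlowup u v x huv hx) u v x :=
  ⟨huv, hx, rfl, fun _ _ => decide_eq_true_iff, fun _ => rfl⟩

def relabel (G : WGraph) (e : ℕ ≃ ℕ) : WGraph where
  verts := G.verts.map e.toEmbedding
  adj a b := G.adj (e.symm a) (e.symm b)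
  symm _ _ := G.symm _ _
  loopless _ := G.loopless _
  support a b h := by
    simp only [Finset.mem_map_equiv]
    exact G.support _ _ h
  wt a := G.wt (e.symm a)

lemma wIso_relabel (G : WGraph) (e : ℕ ≃ ℕ) : WIso G (G.relabel e) := by
  refine ⟨e, ⟨?_, e.injective.injOn, ?_⟩, ?_, ?_⟩
  · intro a ha
    simpa [relabel] using ha
  · intro a ha
    exact ⟨e.symm a, by simpa [relabel, Finset.mem_map_equiv] using ha, by simp⟩
  all_goals simp [relabel]

namespace BirEq

lemma refl (G : WGraph) : BirEq G G := Relation.EqvGen.refl _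

lemma symm {G G' : WGraph} (h : BirEq G G') : BirEq G' G := Relation.EqvGen.symm _ _ h

lemma trans {G₁ G₂ G₃ : WGraph} (h₁₂ : BirEq G₁ G₂) (h₂₃ : BirEq G₂ G₃) :
    BirEq G₁ G₃ :=
  Relation.EqvGen.trans _ _ _ h₁₂ h₂₃

lemma of_isInnerBlowup {G G' : WGraph} {u v x : ℕ} (h : IsInnerBlowup G G' u v x) :
    BirEq G G' :=
  Relation.EqvGen.rel _ _ (.inl (.inl (.inl ⟨u, v, x, h⟩)))

lemma of_wIso {G G' : WGraph} (h : WIso G G') : BirEq G G' := Relation.EqvGen.rel _ _ (.inr h)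

end BirEq

lemma isInnerBlowup_relabel_swap_innerBlowup (G : WGraph) {b z b' x : ℕ}
    (hbz : G.adj b z = true) (hzb' : G.adj z b' = true) (hdeg : G.deg z = 2) (hbb' : b ≠ b')
    (w : ℕ → ℤ) (hwz : w z = 0) (hx : x ∉ G.verts) :
    IsInnerBlowup ((G.withWt (w - Pi.single b 1 + Pi.single b' 1)).relabel (Equiv.swap x z))
      ((G.withWt w).innerBlowup b z x hbz hx) x b' z := by
  have hnbr := adj_iff_of_deg_eq_two (G.symm _ _ hbz) hzb' hdeg hbb'
  have hnbr' : ∀ c, G.adj c z = true ↔ c = b ∨ c = b' := fun c =>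
    ⟨fun h => (hnbr c).1 (G.symm _ _ h), fun h => G.symm _ _ ((hnbr c).2 h)⟩
  have hxl : ∀ c, G.adj x c = false := fun c => by
    simpa using fun h => hx (G.support x c h).1
  have hxr : ∀ c, G.adj c x = false := fun c => by
    simpa using fun h => hx (G.support c x h).2
  have hbv := (G.support _ _ hbz).1
  have hzv := (G.support _ _ hbz).2
  have hb'v := (G.support _ _ hzb').2
  have hbz' := ne_of_adj hbz
  have hzb'' := ne_of_adj hzb'
  have hxb : x ≠ b := fun h => hx (h ▸ hbv)
  have hxz : x ≠ z := fun h => hx (h ▸ hzv)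
  have hxb' : x ≠ b' := fun h => hx (h ▸ hb'v)
  refine ⟨?_, ?_, ?_, ?_, ?_⟩
  · simp [relabel, withWt, Equiv.swap_apply_of_ne_of_ne hxb'.symm hzb''.symm, hzb']
  · simp [relabel, withWt, Finset.mem_map_equiv, hx]
  · ext a
    simp only [innerBlowup, relabel, withWt, Finset.mem_insert, Finset.mem_map_equiv,
      Equiv.symm_swap]
    by_cases hax : a = x
    · simp [hax, hzv]
    by_cases haz : a = z
    · simp [haz, hzv]
    · simp [Equiv.swap_apply_of_ne_of_ne hax haz, hax, haz]
  · intro a c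
    simp only [innerBlowup, relabel, withWt, Equiv.symm_swap]
    by_cases hax : a = x <;> by_cases haz : a = z <;> by_cases hcx : c = x <;>
      by_cases hcz : c = z <;> simp_all [Equiv.swap_apply_of_ne_of_ne] <;> grind
  · intro a
    simp only [innerBlowup, relabel, withWt, Equiv.symm_swap]
    by_cases hax : a = x
    · simp [hax, hxz, hbz'.symm, hzb'', hwz]
    by_cases haz : a = z
    · simp [haz, hxz.symm, hwz]
    · simp [Equiv.swap_apply_of_ne_of_ne hax haz, hax, haz, Pi.single_apply]
      grind

lemma birEq_withWt_shift_one (G : WGraph) {b z b' : ℕ} (hbz : G.adj b z = true)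
    (hzb' : G.adj z b' = true) (hdeg : G.deg z = 2) (hbb' : b ≠ b') (w : ℕ → ℤ)
    (hwz : w z = 0) : BirEq (G.withWt w) (G.withWt (w - Pi.single b 1 + Pi.single b' 1)) := by
  obtain ⟨x, hx⟩ := Infinite.exists_notMem_finset G.verts
  have hblowdown := G.isInnerBlowup_relabel_swap_innerBlowup hbz hzb' hdeg hbb' w hwz hx
  exact (BirEq.of_isInnerBlowup (isInnerBlowup_innerBlowup ..)).trans
    ((BirEq.of_isInnerBlowup hblowdown).symm.trans (BirEq.of_wIso (wIso_relabel ..)).symm)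

lemma birEq_withWt_shift (G : WGraph) {b z b' : ℕ} (hbz : G.adj b z = true)
    (hzb' : G.adj z b' = true) (hdeg : G.deg z = 2) (hbb' : b ≠ b') (w : ℕ → ℤ)
    (hwz : w z = 0) (c : ℤ) :
    BirEq (G.withWt w) (G.withWt (w - Pi.single b c + Pi.single b' c)) := by
  have hzb : z ≠ b := (ne_of_adj hbz).symm
  have hzb'' : z ≠ b' := ne_of_adj hzb'
  induction c using Int.induction_on with
  | zero =>
    simp only [Pi.single_zero, sub_zero, add_zero]
    exact BirEq.refl _
  | succ i ih =>
    have hstep := G.birEq_withWt_shift_one hbz hzb' hdeg hbb'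
      (w - Pi.single b i + Pi.single b' i) (by simp [hzb, hzb'', hwz])
    convert ih.trans hstep using 2
    simp only [Pi.single_add]
    abel
  | pred i ih =>
    have hstep := G.birEq_withWt_shift_one (G.symm _ _ hzb') (G.symm _ _ hbz) hdeg hbb'.symm
      (w - Pi.single b (-i : ℤ) + Pi.single b' (-i : ℤ)) (by simp [hzb, hzb'', hwz])
    convert ih.trans hstep using 2
    simp only [Pi.single_sub, Pi.single_neg]
    abel

end WGraph

def collectWt : List ℕ → (ℕ → ℤ) → ℕ → ℤ
  | b :: b' :: rest, w => collectWt (b' :: rest) (w - Pi.single b (w b) + Pi.single b' (w b))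
  | _, w => w

lemma collectWt_apply : ∀ {bs : List ℕ}, bs.Nodup → ∀ {blast : ℕ},
    bs.getLast? = some blast → ∀ (w : ℕ → ℤ) (a : ℕ), collectWt bs w a =
      if a ∈ bs.dropLast then 0 else if a = blast then (bs.map w).sum else w a
  | [b], _, blast, hblast, w, a => by
    obtain rfl : b = blast := by simpa using hblast
    by_cases hab : a = b <;> simp [collectWt, hab]
  | b :: b' :: rest, hnd, blast, hblast, w, a => by
    rw [List.getLast?_cons_cons] at hblast
    obtain ⟨hb, hb'⟩ : b ∉ b' :: rest ∧ b' ∉ rest := by simp_all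
    have hbb' : b ≠ b' := by simp_all
    have hblast_mem : blast ∈ b' :: rest := List.mem_of_getLast? hblast
    have hb'_mem : b' ∈ (b' :: rest).dropLast ∨ b' = blast := by
      cases rest with
      | nil => simp_all
      | cons => simp
    have hsum : ((b' :: rest).map (w - Pi.single b (w b) + Pi.single b' (w b))).sum =
        w b + ((b' :: rest).map w).sum := by
      have hrest : rest.map (w - Pi.single b (w b) + Pi.single b' (w b)) = rest.map w :=
        List.map_congr_left fun y hy => by
          have hyb : y ≠ b := by grind
          have hyb' : y ≠ b' := by grind
          simp [hyb, hyb']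
      simp [hrest, hbb']
      ring
    rw [collectWt, collectWt_apply hnd.of_cons hblast, hsum, List.dropLast_cons_cons]
    have hdrop := List.mem_of_mem_dropLast (l := b' :: rest) (a := a)
    by_cases hab : a = b
    · subst hab
      have hab : a ≠ blast := by grind
      simp_all
    by_cases hab' : a = b'
    · subst hab'
      rcases hb'_mem with h | h <;> simp_all
    · simp [hab, hab']

lemma interleave_cons_cons (b z : ℕ) (bs zs : List ℕ) :
    interleave (b :: bs) (z :: zs) = b :: z :: interleave bs zs := by
  rw [interleave, interleave]

lemma interleave_perm : ∀ (xs ys : List ℕ), (interleave xs ys).Perm (xs ++ ys)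
  | [], ys => by simp [interleave]
  | x :: xs, ys => by
    rw [interleave]
    exact ((interleave_perm ys xs).cons x).trans (List.perm_append_comm.cons x)
  termination_by xs ys => xs.length + ys.length

lemma WGraph.birEq_withWt_collectWt (G : WGraph) : ∀ {bs zs : List ℕ},
    zs.length + 1 = bs.length → (interleave bs zs).Nodup →
    (interleave bs zs).IsChain (fun a b => G.adj a b = true) → (∀ z ∈ zs, G.deg z = 2) →
    ∀ w : ℕ → ℤ, (∀ z ∈ zs, w z = 0) → BirEq (G.withWt w) (G.withWt (collectWt bs w))
  | [_], [], _, _, _, _, _, _ => BirEq.refl _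
  | b :: b' :: rest, z :: zs, hlen, hnd, hch, hdeg, w, hw => by
    rw [interleave_cons_cons, interleave] at hnd hch
    simp only [List.isChain_cons_cons] at hch
    obtain ⟨hbz, hzb', hch⟩ := hch
    have hmem := fun a => (interleave_perm zs rest).mem_iff (a := a)
    have hbb' : b ≠ b' := by grind
    have hw' : ∀ z' ∈ zs,
        (w - Pi.single b (w b) + Pi.single b' (w b) : ℕ → ℤ) z' = 0 := by
      intro z' hz'
      have hz'b : z' ≠ b := by grind
      have hz'b' : z' ≠ b' := by grind
      simpa [hz'b, hz'b'] using hw z' (by simp [hz'])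
    have hshift := G.birEq_withWt_shift hbz hzb' (hdeg z (by simp)) hbb' w (hw z (by simp)) (w b)
    rw [collectWt]
    refine hshift.trans (G.birEq_withWt_collectWt (by simpa using hlen) ?_ ?_ (by grind) _ hw')
    · rw [interleave]
      exact (List.nodup_cons.1 (List.nodup_cons.1 hnd).2).2
    · rwa [interleave]
  | [], _, hlen, _, _, _, _, _ | [_], _ :: _, hlen, _, _, _, _, _
  | _ :: _ :: _, [], hlen, _, _, _, _, _ => by simp at hlen

open WGraph in
theorem birEq_collect_weights_at_last_vertex_general
    (Γ : WGraph) (bs zs : List ℕ)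
    (hlen : zs.length + 1 = bs.length)
    (hnd : (interleave bs zs).Nodup)
    (hch : (interleave bs zs).Chain' (fun a b => Γ.adj a b = true))
    (hz : ∀ z ∈ zs, Γ.deg z = 2 ∧ Γ.wt z = 0)
    (blast : ℕ) (hblast : bs.getLast? = some blast)
    (Γ' : WGraph)
    (hverts : Γ'.verts = Γ.verts)
    (hadj : ∀ a b, Γ'.adj a b = Γ.adj a b)
    (hwt : ∀ a, Γ'.wt a =
      if a ∈ bs.dropLast then 0
      else if a = blast then (bs.map Γ.wt).sum
      else Γ.wt a) :
    BirEq Γ Γ' := by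
  have hbs : bs.Nodup := ((interleave_perm bs zs).nodup_iff.1 hnd).of_append_left
  have hΓ' : Γ' = Γ.withWt (collectWt bs Γ.wt) := by
    rw [eq_withWt_of_verts_adj_eq hverts hadj]
    congr 1
    funext a
    rw [hwt, collectWt_apply hbs hblast]
  rw [hΓ']
  exact Γ.birEq_withWt_collectWt hlen hnd hch (fun z hz' => (hz z hz').1) Γ.wt
    (fun z hz' => (hz z hz').2)

open WGraph in
/-- collecting weights at the end of a chain of branching points:
let `Γ` be a weighted tree containing a path `b₁, z₁, b₂, z₂, …, z_{n-1}, bₙ`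
(`n ≥ 1`) where each `zᵢ` has degree `2` in `Γ` and weight `0`. Then `Γ` is
birationally equivalent to the weighted tree with the same underlying tree and the
same weights, except that `bᵢ` has weight `0` for all `i < n` and `bₙ` has weight
`w₁ + ⋯ + wₙ`, where `wᵢ` is the `Γ`-weight of `bᵢ`. -/
theorem birEq_collect_weights_at_last_vertex
    (Γ : WGraph) (hT : Γ.IsTree) (bs zs : List ℕ)
    (hn : 1 ≤ bs.length) (hlen : zs.length + 1 = bs.length)
    (hnd : (interleave bs zs).Nodup)
    (hch : (interleave bs zs).Chain' (fun a b => Γ.adj a b = true))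
    (hmem : ∀ x ∈ interleave bs zs, x ∈ Γ.verts)
    (hz : ∀ z ∈ zs, Γ.deg z = 2 ∧ Γ.wt z = 0)
    (blast : ℕ) (hblast : bs.getLast? = some blast)
    (Γ' : WGraph)
    (hverts : Γ'.verts = Γ.verts)
    (hadj : ∀ a b, Γ'.adj a b = Γ.adj a b)
    (hwt : ∀ a, Γ'.wt a =
      if a ∈ bs.dropLast then 0
      else if a = blast then (bs.map Γ.wt).sum
      else Γ.wt a) :
    BirEq Γ Γ' :=
  birEq_collect_weights_at_last_vertex_general Γ bs zs hlen hnd hch hz blast hblast Γ' hverts hadj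
    hwt
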